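/- Fix K ≥ 1, N ≥ K, t ∉ {1, 2, ..., K}, and any target vector b ∈ ℝ^{K}. Viewing only the first K rows, the K×K matrix with entries C_{n}(k, t) for n = 0,...,K−1 and k = 1,...,K is invertible; hence for any prescribed values b_0, ..., b_{K−1} there exist unique coefficients θ_1, ..., θ_K with Σ_{k=1}^{K} θ_k · C_n(k, t) = b_n for all n = 0, ..., K−1. -/
import Mathlib

open Matrix

/-- The Poisson-Charlier polynomials defined by the three-term recurrence. -/
noncomputable def PC (γ t : ℝ) : ℕ → ℝ
  | 0 => 1
  | 1 => γ - t
  | n + 2 => (γ - ((n : ℝ) + 2) - t + 1) * PC γ t (n + 1) - ((n : ℝ) + 1) * t * PC γ t n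

open Polynomial in
/-- The Poisson-Charlier polynomials as polynomials in γ. -/
noncomputable def PCpoly (t : ℝ) : ℕ → ℝ[X]
  | 0 => 1
  | 1 => X - C t
  | n + 2 => (X - C (((n : ℝ) + 2) + t - 1)) * PCpoly t (n + 1)
      - C (((n : ℝ) + 1) * t) * PCpoly t n

open Polynomial in
lemma PCpoly_eval (t γ : ℝ) : ∀ n, (PCpoly t n).eval γ = PC γ t n
  | 0 => by simp [PCpoly, PC]
  | 1 => by simp [PCpoly, PC]
  | n + 2 => by
    simp only [PCpoly, PC, eval_sub, eval_mul, eval_X, eval_C,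
      PCpoly_eval t γ (n + 1), PCpoly_eval t γ n]
    ring

open Polynomial in
lemma PCpoly_monic_deg (t : ℝ) : ∀ n, (PCpoly t n).Monic ∧ (PCpoly t n).natDegree = n
  | 0 => by simp [PCpoly, monic_one]
  | 1 => by
    constructor
    · exact monic_X_sub_C t
    · exact natDegree_X_sub_C t
  | n + 2 => by
    obtain ⟨h1m, h1d⟩ := PCpoly_monic_deg t (n + 1)
    obtain ⟨h0m, h0d⟩ := PCpoly_monic_deg t n
    have hm : ((X - C (((n : ℝ) + 2) + t - 1)) * PCpoly t (n + 1)).Monic :=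
      (monic_X_sub_C _).mul h1m
    have hdeg : ((X - C (((n : ℝ) + 2) + t - 1)) * PCpoly t (n + 1)).natDegree = n + 2 := by
      rw [(monic_X_sub_C _).natDegree_mul h1m, natDegree_X_sub_C, h1d]
      omega
    have hlt : (C (((n : ℝ) + 1) * t) * PCpoly t n).degree
        < ((X - C (((n : ℝ) + 2) + t - 1)) * PCpoly t (n + 1)).degree := by
      calc (C (((n : ℝ) + 1) * t) * PCpoly t n).degree
          ≤ (n : WithBot ℕ) := by
            refine le_trans (degree_mul_le _ _) ?_
            have := degree_C_le (a := ((n : ℝ) + 1) * t)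
            have h0 : (PCpoly t n).degree ≤ (n : WithBot ℕ) := by
              simpa [h0d] using degree_le_natDegree (p := PCpoly t n)
            calc (C (((n : ℝ) + 1) * t)).degree + (PCpoly t n).degree
                ≤ 0 + (n : WithBot ℕ) := add_le_add this h0
              _ = (n : WithBot ℕ) := by simp
        _ < ((n : ℕ) + 2 : ℕ) := by exact_mod_cast WithBot.coe_lt_coe.mpr (by omega)
        _ = _ := by rw [degree_eq_natDegree hm.ne_zero, hdeg]
    constructor
    · exact hm.sub_of_left hlt
    · rw [PCpoly]
      rw [natDegree_sub_eq_left_of_natDegree_lt, hdeg]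
      by_cases hz : C (((n : ℝ) + 1) * t) * PCpoly t n = 0
      · rw [hz, natDegree_zero, hdeg]; omega
      · exact natDegree_lt_natDegree hz hlt

/-- The `K × K` Poisson-Charlier coefficient matrix with entries `C_n(k,t)`
(n = 0,…,K−1; k = 1,…,K) is invertible; hence any prescribed target vector `b`
is matched by unique coefficients `θ` with `Σ_k θ_k C_n(k,t) = b_n`. -/
theorem PC_square_matrix_invertible {K : ℕ} (hK : 1 ≤ K) (N : ℕ) (hN : K ≤ N) (t : ℝ)
    (ht : ∀ j ∈ Finset.Icc 1 K, t ≠ (j : ℝ)) :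
    IsUnit (Matrix.of fun (n : Fin K) (k : Fin K) => PC ((k : ℕ) + 1 : ℝ) t (n : ℕ)) ∧
      ∀ b : Fin K → ℝ, ∃! θ : Fin K → ℝ,
        ∀ n : Fin K, ∑ k : Fin K, θ k * PC ((k : ℕ) + 1 : ℝ) t (n : ℕ) = b n := by
  set M : Matrix (Fin K) (Fin K) ℝ :=
    Matrix.of fun (n : Fin K) (k : Fin K) => PC ((k : ℕ) + 1 : ℝ) t (n : ℕ) with hM
  have hdet : M.det ≠ 0 := by
    have hT : M = (Matrix.of fun (k n : Fin K) =>
        (PCpoly t (n : ℕ)).eval (((k : ℕ) : ℝ) + 1))ᵀ := by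
      ext n k
      simp [hM, PCpoly_eval]
    rw [hT, Matrix.det_transpose,
      ← Matrix.det_eval_matrixOfPolynomials_eq_det_vandermonde
        (fun k : Fin K => ((k : ℕ) : ℝ) + 1) (fun n => PCpoly t (n : ℕ))
        (fun n => (PCpoly_monic_deg t n).2) (fun n => (PCpoly_monic_deg t n).1)]
    rw [Ne, Matrix.det_vandermonde_eq_zero_iff]
    rintro ⟨i, j, hij, hne⟩
    apply hne
    have : ((i : ℕ) : ℝ) = ((j : ℕ) : ℝ) := by linarith
    exact Fin.ext (by exact_mod_cast this)
  have hunit : IsUnit M := isUnit_iff_isUnit_det M |>.mpr (isUnit_iff_ne_zero.mpr hdet)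
  refine ⟨hunit, fun b => ?_⟩
  have hInv : Invertible M := hunit.invertible
  have key : ∀ θ : Fin K → ℝ,
      (∀ n : Fin K, ∑ k : Fin K, θ k * M n k = b n) ↔ M *ᵥ θ = b := by
    intro θ
    constructor
    · intro h; funext n; rw [← h n, Matrix.mulVec, dotProduct]
      exact Finset.sum_congr rfl fun k _ => mul_comm _ _
    · intro h n; rw [← congrFun h n, Matrix.mulVec, dotProduct]
      exact Finset.sum_congr rfl fun k _ => mul_comm _ _
  have hd : IsUnit M.det := isUnit_iff_ne_zero.mpr hdet
  refine ⟨M⁻¹ *ᵥ b, ?_, ?_⟩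
  · exact (key _).mpr
      (by rw [Matrix.mulVec_mulVec, Matrix.mul_nonsing_inv M hd, Matrix.one_mulVec])
  · intro θ hθ
    have h : M *ᵥ θ = b := (key θ).mp hθ
    rw [← h, Matrix.mulVec_mulVec, Matrix.nonsing_inv_mul M hd, Matrix.one_mulVec]
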